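/- arXiv:1909.08857 — 4 statements merged into one kernel-verified Lean document; each statement's English description precedes it below -/
import Mathlib

section
/- Let D be a positive integer, let Q : ℝ^D → ℝ be differentiable at a point θ', and let θ ∈ ℝ^D satisfy Q(θ) ≤ Q(θ'). Then, as α tends to 1 from the left, the scaled skewed quasiconvex Jensen divergence (1/(α(1−α)))·(max(Q(θ), Q(θ')) − Q((1−α)·θ + α·θ')) tends to −(DQ(θ'))(θ − θ'), i.e., to the negative of the derivative of Q at θ' evaluated in the direction θ − θ'. -/
open Filter Set Topology

/-! Since `Q θ ≤ Q θ'`, the divergence is `Q θ' - Q (θ' + (1 - α) • (θ - θ'))`, so after dividing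
by `1 - α` it is minus a difference quotient of `Q` at `θ'` in the direction `θ - θ'`; the remaining
factor `1 / α` tends to `1`. -/

theorem HasLineDerivAt.tendsto_slope_lineMap_one {𝕜 E F : Type*} [NontriviallyNormedField 𝕜]
    [NormedAddCommGroup E] [NormedSpace 𝕜 E] [NormedAddCommGroup F] [NormedSpace 𝕜 F]
    {f : E → F} {f' : F} {x y : E} (hf : HasLineDerivAt 𝕜 f f' y (x - y)) :
    Tendsto (fun α : 𝕜 => (1 - α)⁻¹ • (f ((1 - α) • x + α • y) - f y)) (𝓝[≠] 1) (𝓝 f') := by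
  have hsub : Tendsto (fun α : 𝕜 => 1 - α) (𝓝[≠] 1) (𝓝[≠] 0) := by
    refine tendsto_nhdsWithin_of_tendsto_nhds_of_eventually_within _ ?_ ?_
    · simpa using ((continuous_sub_left (1 : 𝕜)).tendsto 1).mono_left nhdsWithin_le_nhds
    · filter_upwards [self_mem_nhdsWithin] with α hα
      exact sub_ne_zero.2 (Ne.symm hα)
  refine (hf.tendsto_slope_zero.comp hsub).congr fun α => ?_
  simp only [Function.comp_apply]
  congr 3
  module

theorem quasiconvex_bregman_limit_finite_case_general
    (D : ℕ)
    (Q : EuclideanSpace ℝ (Fin D) → ℝ) (θ θ' : EuclideanSpace ℝ (Fin D))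
    (hQ : DifferentiableAt ℝ Q θ')
    (hle : Q θ ≤ Q θ') :
    Tendsto
      (fun α : ℝ =>
        (1 / (α * (1 - α))) * (max (Q θ) (Q θ') - Q ((1 - α) • θ + α • θ')))
      (nhdsWithin 1 (Set.Ioo (0 : ℝ) 1))
      (nhds (-(fderiv ℝ Q θ' (θ - θ')))) := by
  have hslope := (hQ.hasFDerivAt.hasLineDerivAt (θ - θ')).tendsto_slope_lineMap_one
  have hinv : Tendsto (fun α : ℝ => α⁻¹) (𝓝 1) (𝓝 1) := by
    simpa using tendsto_inv₀ (one_ne_zero (α := ℝ))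
  have hlim := (hinv.mono_left nhdsWithin_le_nhds).mul hslope |>.neg
  rw [one_mul] at hlim
  refine (hlim.mono_left (nhdsWithin_mono _ fun α hα => hα.2.ne)).congr fun α => ?_
  rw [max_eq_right hle, smul_eq_mul]
  field_simp
  ring

theorem quasiconvex_bregman_limit_finite_case
    (D : ℕ) (hD : 0 < D)
    (Q : EuclideanSpace ℝ (Fin D) → ℝ) (θ θ' : EuclideanSpace ℝ (Fin D))
    (hQ : DifferentiableAt ℝ Q θ')
    (hle : Q θ ≤ Q θ') :
    Tendsto
      (fun α : ℝ =>
        (1 / (α * (1 - α))) * (max (Q θ) (Q θ') - Q ((1 - α) • θ + α • θ')))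
      (nhdsWithin 1 (Set.Ioo (0 : ℝ) 1))
      (nhds (-(fderiv ℝ Q θ' (θ - θ')))) :=
  quasiconvex_bregman_limit_finite_case_general D Q θ θ' hQ hle
end

section
/- Let Q : ℝ → ℝ be the strictly quasiconvex generator Q(x) = x³. For every θ < 0 (taking θ' = 0, so θ ≠ θ'), as α tends to 1 from the left, the scaled skewed quasiconvex Jensen divergence (1/(α(1−α)))·(max(Q(θ), Q(0)) − Q((1−α)·θ)) = −((1−α)²/α)·θ³ tends to 0. Hence the quasiconvex Bregman pseudo-divergence fails the law of the indiscernibles at the inflection point θ' = 0. -/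
open Filter Set

theorem quasiconvex_bregman_cube_inflection
    (Q : ℝ → ℝ) (hQ : Q = fun x => x ^ 3)
    (θ : ℝ) (hθ : θ < 0) :
    Tendsto
      (fun α : ℝ =>
        (1 / (α * (1 - α))) * (max (Q θ) (Q 0) - Q ((1 - α) * θ + α * 0)))
      (nhdsWithin 1 (Set.Ioo (0 : ℝ) 1))
      (nhds 0) ∧
    ∀ α ∈ Set.Ioo (0 : ℝ) 1,
      (1 / (α * (1 - α))) * (max (Q θ) (Q 0) - Q ((1 - α) * θ + α * 0))
        = -((1 - α) ^ 2 / α) * θ ^ 3 := by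
  have key : ∀ α ∈ Set.Ioo (0 : ℝ) 1,
      (1 / (α * (1 - α))) * (max (Q θ) (Q 0) - Q ((1 - α) * θ + α * 0))
        = -((1 - α) ^ 2 / α) * θ ^ 3 := by
    intro α hα
    obtain ⟨h0, h1⟩ := hα
    subst hQ
    simp only
    have hmax : max (θ ^ 3) ((0:ℝ) ^ 3) = 0 := by
      rw [max_eq_right]
      · norm_num
      · simpa using (Odd.pow_neg (by decide) hθ).le
    rw [hmax]
    have hα0 : α ≠ 0 := ne_of_gt h0
    have h1' : (1 : ℝ) - α ≠ 0 := by linarith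
    field_simp
    ring
  refine ⟨?_, key⟩
  have h2 : Tendsto (fun α : ℝ => -((1 - α) ^ 2 / α) * θ ^ 3)
      (nhdsWithin 1 (Set.Ioo (0 : ℝ) 1)) (nhds 0) := by
    have : Tendsto (fun α : ℝ => -((1 - α) ^ 2 / α) * θ ^ 3) (nhds 1) (nhds 0) := by
      have := (Continuous.tendsto (by continuity : Continuous fun α : ℝ => -((1 - α) ^ 2) * θ ^ 3) 1)
      have h3 : Tendsto (fun α : ℝ => -((1 - α) ^ 2 / α) * θ ^ 3) (nhds 1)
          (nhds (-((1 - 1) ^ 2 / 1) * θ ^ 3)) := by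
        apply Tendsto.mul_const
        apply Tendsto.neg
        apply Tendsto.div
        · exact (Continuous.tendsto (by continuity) 1)
        · exact (Continuous.tendsto continuous_id 1)
        · norm_num
      simpa using h3
    exact this.mono_left nhdsWithin_le_nhds
  exact h2.congr' (by
    filter_upwards [self_mem_nhdsWithin] with α hα
    exact (key α hα).symm)
end

section
/- Let Q : ℝ → ℝ be strictly quasiconvex, let θ ≠ θ' be reals with Q(θ) ≤ Q(θ'), and let δ > 0. Then the δ-averaged quasiconvex Bregman divergence (1/δ)·(Q(θ' + δ·(θ' − θ)) − Q(θ')) is strictly positive. (Hence the δ-averaged quasiconvex Bregman divergence satisfies the law of the indiscernibles.) -/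
open Set

/-- A real function is strictly quasiconvex if on every nontrivial segment it is
strictly below the max of the endpoint values. -/
def StrictQuasiconvex (Q : ℝ → ℝ) : Prop :=
  ∀ x y : ℝ, x ≠ y → ∀ t ∈ Set.Ioo (0 : ℝ) 1,
    Q ((1 - t) * x + t * y) < max (Q x) (Q y)

theorem delta_averaged_quasiconvex_bregman_pos
    (Q : ℝ → ℝ) (hQ : StrictQuasiconvex Q)
    (θ θ' : ℝ) (hne : θ ≠ θ') (hle : Q θ ≤ Q θ')
    (δ : ℝ) (hδ : 0 < δ) :
    0 < (1 / δ) * (Q (θ' + δ * (θ' - θ)) - Q θ') := by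
  set z : ℝ := θ' + δ * (θ' - θ) with hz
  have hδ1 : (0:ℝ) < 1 + δ := by linarith
  have hxz : θ ≠ z := by
    intro h
    apply hne
    have : (1 + δ) * (θ' - θ) = 0 := by rw [hz] at h; nlinarith
    have := mul_eq_zero.mp this
    rcases this with h1 | h2
    · linarith
    · linarith
  have ht : (1 / (1 + δ)) ∈ Set.Ioo (0:ℝ) 1 := by
    constructor
    · positivity
    · rw [div_lt_one hδ1]; linarith
  have hkey := hQ θ z hxz (1 / (1 + δ)) ht
  have heq : (1 - 1 / (1 + δ)) * θ + (1 / (1 + δ)) * z = θ' := by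
    field_simp [hz]; ring
  rw [heq] at hkey
  have : Q θ' < Q z := by
    rcases max_cases (Q θ) (Q z) with ⟨h1, _⟩ | ⟨h1, _⟩ <;> rw [h1] at hkey <;> linarith
  have h1 : 0 < 1 / δ := by positivity
  nlinarith
end

section
/- Let F : ℝ → ℝ be differentiable at θ' with 0 < F(θ') < F(θ). Then the r-power Bregman divergence B_F^r(θ : θ') := (F(θ)^r − F(θ')^r)/(r·F(θ')^{r−1}) − (θ − θ')·F'(θ') tends to +∞ as the real parameter r tends to +∞. -/
open Filter Real

theorem power_bregman_tendsto_atTop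
    (F : ℝ → ℝ) (θ θ' : ℝ)
    (hF : DifferentiableAt ℝ F θ')
    (hpos : 0 < F θ') (hlt : F θ' < F θ) :
    Tendsto
      (fun r : ℝ =>
        (F θ ^ r - F θ' ^ r) / (r * F θ' ^ (r - 1)) - (θ - θ') * deriv F θ')
      atTop
      atTop := by
  set a := F θ with ha
  set b := F θ' with hb
  set K := (θ - θ') * deriv F θ' with hK
  have hbpos : 0 < b := hpos
  have hapos : 0 < a := lt_trans hpos hlt
  set c := a / b with hc
  have hc1 : 1 < c := (one_lt_div hbpos).mpr hlt
  have hlogc : 0 < Real.log c := Real.log_pos hc1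
  -- exp x / x → atTop
  have h1 : Tendsto (fun x : ℝ => Real.exp x / x) atTop atTop := by
    simpa using Real.tendsto_exp_div_pow_atTop 1
  have h2 : Tendsto (fun r : ℝ => r * Real.log c) atTop atTop :=
    tendsto_id.atTop_mul_const hlogc
  have h3 : Tendsto (fun r : ℝ => Real.exp (r * Real.log c) / (r * Real.log c))
      atTop atTop := h1.comp h2
  have h4 : Tendsto (fun r : ℝ => Real.exp (r * Real.log c) / (r * Real.log c) * Real.log c)
      atTop atTop := h3.atTop_mul_const hlogc
  have h5 : Tendsto (fun r : ℝ => c ^ r / r) atTop atTop := by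
    refine h4.congr' ?_
    filter_upwards [eventually_gt_atTop (0 : ℝ)] with r hr
    rw [Real.rpow_def_of_pos (by positivity : (0:ℝ) < c) r, mul_comm (Real.log c) r]
    have : r ≠ 0 := ne_of_gt hr
    have : Real.log c ≠ 0 := ne_of_gt hlogc
    field_simp
  have h6 : Tendsto (fun r : ℝ => b * (c ^ r / r)) atTop atTop :=
    h5.const_mul_atTop hbpos
  have h7 : Tendsto (fun r : ℝ => -(b / r) - K) atTop (nhds (-(0:ℝ) - K)) := by
    exact ((tendsto_const_nhds.div_atTop tendsto_id).neg).sub_const K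
  have h8 : Tendsto (fun r : ℝ => b * (c ^ r / r) + (-(b / r) - K)) atTop atTop :=
    h6.atTop_add h7
  refine h8.congr' ?_
  filter_upwards [eventually_gt_atTop (0 : ℝ)] with r hr
  have hbne : b ≠ 0 := ne_of_gt hbpos
  have hbr : (0:ℝ) < b ^ (r - 1) := Real.rpow_pos_of_pos hbpos _
  have key : (a ^ r - b ^ r) / (r * b ^ (r - 1)) = b * (c ^ r / r) + -(b / r) := by
    have h9 : c ^ r = a ^ r / b ^ r := Real.div_rpow (le_of_lt hapos) (le_of_lt hbpos) r
    have h10 : b ^ (r - 1) = b ^ r / b := by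
      rw [Real.rpow_sub hbpos, Real.rpow_one]
    have hbrpos : (0:ℝ) < b ^ r := Real.rpow_pos_of_pos hbpos _
    rw [h9, h10]
    field_simp
    ring
  rw [key]
  ring
end
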